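/- arXiv:2105.13457 — 6 statements merged into one kernel-verified Lean document; each statement's English description precedes it below -/
import Mathlib

section
/- There is no finite simple graph G on 6 vertices such that the Hilbert series of the quotient of the exterior algebra by the edge ideal of G equals 1 + 6t + 9t^2 + t^3; equivalently, there is no simple graph on 6 vertices with exactly 6 edges (hence 9 non-edges) having exactly one independent set of size 3 and no independent set of size 4. -/
/-- A finset of vertices is an independent set of the graph `G`. -/
def SimpleGraph.IsIndepFinset {α : Type*} (G : SimpleGraph α) (s : Finset α) : Prop :=
  ∀ a ∈ s, ∀ b ∈ s, ¬ G.Adj a b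

/-!
Let `I` be the unique independent triple and `J` its complement. A vertex of `J` with two
non-neighbours in `I` would form a second independent triple with them, so each vertex of `J`
has at least two neighbours in `I`. These already account for six edges, so `J` spans no edge
and is a second independent triple.
-/

namespace SimpleGraph

variable {α : Type*} {G : SimpleGraph α}

theorem IsIndepFinset.subset {s t : Finset α} (ht : G.IsIndepFinset t) (hst : s ⊆ t) :
    G.IsIndepFinset s :=
  fun a ha b hb => ht a (hst ha) b (hst hb)

theorem isIndepFinset_insert [DecidableEq α] {x : α} {s : Finset α} :
    G.IsIndepFinset (insert x s) ↔ G.IsIndepFinset s ∧ ∀ b ∈ s, ¬ G.Adj x b := by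
  simp only [IsIndepFinset, Finset.forall_mem_insert, G.irrefl, not_false_eq_true, true_and]
  constructor
  · rintro ⟨hx, hs⟩
    exact ⟨fun a ha => (hs a ha).2, hx⟩
  · rintro ⟨hs, hx⟩
    exact ⟨hx, fun a ha => ⟨fun h => hx a ha h.symm, hs a ha⟩⟩

theorem IsIndepFinset.exists_card_eq_three_mem [DecidableEq α] [DecidableRel G.Adj]
    {s : Finset α} {x : α} (hs : G.IsIndepFinset s) (hx : x ∉ s)
    (h : 1 < (s.filter (fun b => ¬ G.Adj x b)).card) :
    ∃ t : Finset α, t.card = 3 ∧ x ∈ t ∧ G.IsIndepFinset t := by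
  obtain ⟨a, ha, b, hb, hab⟩ := Finset.one_lt_card.mp h
  rw [Finset.mem_filter] at ha hb
  refine ⟨{x, a, b}, ?_, Finset.mem_insert_self x _, ?_⟩
  · have hxab : x ∉ ({a, b} : Finset α) := by
      simp only [Finset.mem_insert, Finset.mem_singleton, not_or]
      exact ⟨fun h => hx (h ▸ ha.1), fun h => hx (h ▸ hb.1)⟩
    rw [Finset.card_insert_of_notMem hxab, Finset.card_pair hab]
  · refine isIndepFinset_insert.mpr ⟨hs.subset ?_, ?_⟩
    · exact Finset.insert_subset ha.1 (Finset.singleton_subset_iff.mpr hb.1)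
    · simp only [Finset.mem_insert, Finset.mem_singleton, forall_eq_or_imp, forall_eq]
      exact ⟨ha.2, hb.2⟩

theorem sum_card_filter_adj_lt_card_edgeFinset (G : SimpleGraph α) [Fintype α] [DecidableEq α]
    [DecidableRel G.Adj] {s t : Finset α} (hst : Disjoint s t) (ht : ¬ G.IsIndepFinset t) :
    ∑ x ∈ t, (s.filter (G.Adj x)).card < G.edgeFinset.card := by
  set cross := (t ×ˢ s).filter (fun p => G.Adj p.1 p.2)
  have hcross : cross.card = ∑ x ∈ t, (s.filter (G.Adj x)).card := by
    simp only [cross, Finset.card_filter, Finset.sum_product]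
  obtain ⟨y, hy, z, hz, hyz⟩ : ∃ y ∈ t, ∃ z ∈ t, G.Adj y z := by
    simpa [IsIndepFinset] using ht
  have hinj : Set.InjOn (fun p : α × α => s(p.1, p.2)) cross := by
    rintro ⟨a, b⟩ hab ⟨a', b'⟩ hab' h
    simp only [cross, Finset.coe_filter, Finset.mem_product, Set.mem_ofPred_eq] at hab hab'
    rcases Sym2.eq_iff.mp h with ⟨rfl, rfl⟩ | ⟨rfl, rfl⟩
    · rfl
    · exact absurd hab.1.1 (Finset.disjoint_left.mp hst hab'.1.2)
  have hsub : cross.image (fun p : α × α => s(p.1, p.2)) ⊂ G.edgeFinset := by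
    refine Finset.ssubset_iff_of_subset ?_ |>.mpr ⟨s(y, z), G.mem_edgeFinset.mpr hyz, ?_⟩
    · intro e he
      obtain ⟨⟨a, b⟩, hab, rfl⟩ := Finset.mem_image.mp he
      exact G.mem_edgeFinset.mpr (Finset.mem_filter.mp hab).2
    · intro he
      obtain ⟨⟨a, b⟩, hab, h⟩ := Finset.mem_image.mp he
      simp only [cross, Finset.mem_filter, Finset.mem_product] at hab
      rcases Sym2.eq_iff.mp h with ⟨-, rfl⟩ | ⟨-, rfl⟩
      · exact Finset.disjoint_left.mp hst hab.1.2 hz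
      · exact Finset.disjoint_left.mp hst hab.1.2 hy
  rw [← hcross, ← Finset.card_image_of_injOn hinj]
  exact Finset.card_lt_card hsub

theorem IsIndepFinset.card_le_card_filter_adj_add_one [DecidableEq α] [DecidableRel G.Adj]
    {s : Finset α} {x : α} (hs : G.IsIndepFinset s) (hxs : x ∉ s)
    (hx : ∀ t : Finset α, t.card = 3 → G.IsIndepFinset t → x ∉ t) :
    s.card ≤ (s.filter (G.Adj x)).card + 1 := by
  by_contra! h
  have hsplit := Finset.card_filter_add_card_filter_not (s := s) (G.Adj x)
  obtain ⟨t, ht3, hxt, ht⟩ := hs.exists_card_eq_three_mem hxs (by omega)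
  exact hx t ht3 ht hxt

end SimpleGraph

/-- There is no simple graph on 6 vertices whose exterior edge-ideal quotient has
Hilbert series `1 + 6t + 9t² + t³`; equivalently, no simple graph on 6 vertices with
exactly 6 edges, exactly one independent set of size 3, and no independent set of size 4. -/
theorem stmt0 :
    ¬ ∃ G : SimpleGraph (Fin 6),
      G.edgeSet.ncard = 6 ∧
      ({s : Finset (Fin 6) | s.card = 3 ∧ G.IsIndepFinset s}).ncard = 1 ∧
      ¬ ∃ s : Finset (Fin 6), s.card = 4 ∧ G.IsIndepFinset s := by
  classical
  rintro ⟨G, hE, hT, -⟩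
  obtain ⟨I, hI⟩ := Set.ncard_eq_one.mp hT
  have hmem (t : Finset (Fin 6)) : t.card = 3 ∧ G.IsIndepFinset t ↔ t = I := Set.ext_iff.mp hI t
  obtain ⟨hI3, hIindep⟩ := (hmem I).mpr rfl
  have hIc : Iᶜ.card = 3 := by rw [Finset.card_compl, hI3]; rfl
  have hadj : ∀ x ∈ Iᶜ, 2 ≤ (I.filter (G.Adj x)).card := fun x hx => by
    rw [Finset.mem_compl] at hx
    have := hIindep.card_le_card_filter_adj_add_one hx
      fun t ht3 ht hxt => hx ((hmem t).mp ⟨ht3, ht⟩ ▸ hxt)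
    omega
  have hdep : ¬ G.IsIndepFinset Iᶜ := fun h => compl_ne_self ((hmem Iᶜ).mp ⟨hIc, h⟩)
  have hcross := G.sum_card_filter_adj_lt_card_edgeFinset disjoint_compl_right hdep
  have hsum : 6 ≤ ∑ x ∈ Iᶜ, (I.filter (G.Adj x)).card :=
    calc 6 = ∑ _x ∈ Iᶜ, 2 := by simp [hIc]
      _ ≤ _ := Finset.sum_le_sum hadj
  rw [← SimpleGraph.coe_edgeFinset, Set.ncard_coe_finset] at hE
  omega
end

section
/- The only simple graph on 6 vertices with 6 edges whose exterior-algebra edge ideal quotient has Hilbert series (1+3t)^2 (equivalently: exactly 9 independent sets of size 2 and no independent sets of size 3) is the disjoint union of two triangles. -/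
/-- The disjoint union of two simple graphs. -/
def SimpleGraph.disjUnion {α β : Type*} (G : SimpleGraph α) (H : SimpleGraph β) :
    SimpleGraph (α ⊕ β) where
  Adj x y := Sum.LiftRel G.Adj H.Adj x y
  symm := ⟨fun x y h => by
    cases h with
    | inl h => exact Sum.LiftRel.inl (G.adj_symm h)
    | inr h => exact Sum.LiftRel.inr (H.adj_symm h)⟩
  loopless := ⟨fun x h => by
    cases h with
    | inl h => exact G.irrefl h
    | inr h => exact H.irrefl h⟩

/-!
The complement `Gᶜ` has `15 - 6 = 9` edges, and it is triangle-free because `G` has no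
independent set of size 3. By Turán's theorem a triangle-free graph on 6 vertices has at most
`|E(T(6,2))| = |E(K₃,₃)| = 9` edges, with equality only for `T(6,2)` itself. Hence `Gᶜ ≃ K₃,₃`,
and `G` is the complement of `K₃,₃`, i.e. two disjoint triangles.
-/

open Finset Fintype

namespace SimpleGraph

variable {V W : Type*}

def Iso.compl {G : SimpleGraph V} {H : SimpleGraph W} (f : G ≃g H) : Gᶜ ≃g Hᶜ where
  toEquiv := f.toEquiv
  map_rel_iff' := by simp [f.injective.eq_iff, f.map_adj_iff]

theorem indepSetFree_iff_not_exists {G : SimpleGraph V} {n : ℕ} :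
    G.IndepSetFree n ↔ ¬∃ s : Finset V, #s = n ∧ ∀ a ∈ s, ∀ b ∈ s, ¬G.Adj a b := by
  simp only [IndepSetFree, isNIndepSet_iff, IsIndepSet, not_exists, not_and,
    and_comm (a := #_ = n)]
  refine forall_congr' fun s => imp_congr_left ?_
  exact ⟨fun h a ha b hb hab => h ha hb (G.ne_of_adj hab) hab,
    fun h a ha b hb _ => h a ha b hb⟩

theorem card_edgeFinset_compl [Fintype V] [DecidableEq V] (G : SimpleGraph V)
    [DecidableRel G.Adj] : #Gᶜ.edgeFinset = (card V).choose 2 - #G.edgeFinset := by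
  rw [← card_edgeFinset_top_eq_card_choose_two, ← card_sdiff_of_subset (edgeFinset_mono le_top),
    ← edgeFinset_sdiff]
  -- `Gᶜ = ⊤ \ G` holds definitionally, but the two edge sets carry different `Fintype` instances.
  congr!

theorem CliqueFree.nonempty_iso_turanGraph_of_card_edgeFinset_le [Fintype V] {G : SimpleGraph V}
    [DecidableRel G.Adj] {r : ℕ} (hG : G.CliqueFree (r + 1))
    (h : #(turanGraph (card V) r).edgeFinset ≤ #G.edgeFinset) :
    Nonempty (G ≃g turanGraph (card V) r) :=
  IsTuranMaximal.nonempty_iso_turanGraph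
    ⟨hG, fun _ _ hH => (hH.card_edgeFinset_le.trans_eq card_edgeFinset_turanGraph.symm).trans h⟩

@[simp]
theorem disjUnion_adj {G : SimpleGraph V} {H : SimpleGraph W} {x y : V ⊕ W} :
    (G.disjUnion H).Adj x y ↔ Sum.LiftRel G.Adj H.Adj x y :=
  Iff.rfl

def completeEquipartiteGraph.complIsoDisjUnionTop (t : ℕ) :
    (completeEquipartiteGraph 2 t)ᶜ ≃g
      (⊤ : SimpleGraph (Fin t)).disjUnion (⊤ : SimpleGraph (Fin t)) where
  toEquiv := (finTwoEquiv.prodCongr (Equiv.refl _)).trans (Equiv.boolProdEquivSum _)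
  map_rel_iff' := by
    rintro ⟨a, i⟩ ⟨b, j⟩
    fin_cases a <;> fin_cases b <;> simp [finTwoEquiv]

def turanGraph.complIsoDisjUnionTop (t : ℕ) :
    (turanGraph (2 * t) 2)ᶜ ≃g (⊤ : SimpleGraph (Fin t)).disjUnion (⊤ : SimpleGraph (Fin t)) :=
  completeEquipartiteGraph.turanGraph.compl.symm.trans
    (completeEquipartiteGraph.complIsoDisjUnionTop t)

end SimpleGraph

open SimpleGraph in
theorem stmt3_general (G : SimpleGraph (Fin 6))
    (hedges : G.edgeSet.ncard = 6)
    (h3 : ¬ ∃ s : Finset (Fin 6), s.card = 3 ∧ ∀ a ∈ s, ∀ b ∈ s, ¬ G.Adj a b) :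
    Nonempty (G ≃g ((⊤ : SimpleGraph (Fin 3)).disjUnion (⊤ : SimpleGraph (Fin 3)))) := by
  classical
  have hfree : Gᶜ.CliqueFree (2 + 1) :=
    (cliqueFree_compl G).2 (indepSetFree_iff_not_exists.2 h3)
  have hcard : #Gᶜ.edgeFinset = 9 := by
    rw [← coe_edgeFinset, Set.ncard_coe_finset] at hedges
    rw [card_edgeFinset_compl, hedges]
    rfl
  obtain ⟨f⟩ := hfree.nonempty_iso_turanGraph_of_card_edgeFinset_le
    (by rw [hcard]; decide)
  rw [← compl_compl G]
  exact ⟨(turanGraph.complIsoDisjUnionTop 3).comp f.compl⟩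

/-- Any simple graph on 6 vertices with 6 edges, exactly 9 independent sets of size 2,
and no independent set of size 3 (equivalently, whose exterior edge-ideal quotient has
Hilbert series `(1+3t)²`) is isomorphic to the disjoint union of two triangles. -/
theorem stmt3 (G : SimpleGraph (Fin 6))
    (hedges : G.edgeSet.ncard = 6)
    (h2 : ({s : Finset (Fin 6) | s.card = 2 ∧ ∀ a ∈ s, ∀ b ∈ s, ¬ G.Adj a b}).ncard = 9)
    (h3 : ¬ ∃ s : Finset (Fin 6), s.card = 3 ∧ ∀ a ∈ s, ∀ b ∈ s, ¬ G.Adj a b) :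
    Nonempty (G ≃g ((⊤ : SimpleGraph (Fin 3)).disjUnion (⊤ : SimpleGraph (Fin 3)))) :=
  stmt3_general G hedges h3
end

section
/- Let E be the exterior algebra on n generators over a field K, M a graded E-module, E' = E ⊗_K Λ⟨x⟩ the exterior algebra on one more generator, and M' = M ⊗_E E'. Then a linear form ℓ' = ℓ + αx of E' (with ℓ ∈ E_1 and α ∈ K) is regular on M' if and only if α ≠ 0 or ℓ is regular on M. Consequently the singular variety of M' in E'_1 equals the singular variety of M in E_1. -/
/-!
If `α` is a unit, `(a, b) ↦ (α⁻¹ σ b, 0)` is a contracting homotopy for the action of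
`ℓ + αx` on `M ⊕ Mx`, so that action is exact. If `ℓ` is regular on `M`, a cycle `(a, b)` is
lifted one coordinate at a time: `a = ℓp`, and then `b - ασ(p)` is an `ℓ`-cycle, hence `ℓq`.
If `α = 0`, the action is diagonal and exactness descends to the first factor.
-/

open ExteriorAlgebra

namespace Function.Exact

variable {M N P M' N' P' : Type*}

theorem of_prodMap [Zero M'] [Zero N'] [Zero P'] [Zero P] {f : M → N} {g : N → P}
    {f' : M' → N'} {g' : N' → P'} (hg' : g' 0 = 0)
    (h : Exact (Prod.map f f') (Prod.map g g')) : Exact f g := by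
  intro y
  constructor
  · intro hy
    obtain ⟨x, hx⟩ := (h (y, 0)).1 (Prod.ext hy hg')
    exact ⟨x.1, congrArg Prod.fst hx⟩
  · rintro ⟨x, rfl⟩
    exact congrArg Prod.fst (h.apply_apply_eq_zero (x, 0))

theorem self_of_homotopy [AddGroup M] {d h : M →+ M} (hdd : ∀ x, d (d x) = 0)
    (hdh : ∀ x, d (h x) + h (d x) = x) : Exact d d := by
  refine of_comp_of_mem_range (funext hdd) fun x hx => ⟨h x, ?_⟩
  simpa [hx] using hdh x

end Function.Exact

section

variable {R M : Type*} [Ring R] [AddCommGroup M] [Module R M] (f σ : M →ₗ[R] M)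

/-- The action of `ℓ + αx` on `M ⊕ Mx`, where `f` is the action of `ℓ` on `M` and `σ` the
parity operator: `(a, b) ↦ (ℓa, ℓb + α σ(a))`. -/
def coneMap (α : R) : M × M →+ M × M :=
  AddMonoidHom.mk' (fun p => (f p.1, f p.2 + α • σ p.1)) fun p q => by
    simp only [Prod.fst_add, Prod.snd_add, map_add, smul_add, Prod.mk_add_mk]
    abel_nf

@[simp]
theorem coneMap_apply (α : R) (p : M × M) : coneMap f σ α p = (f p.1, f p.2 + α • σ p.1) :=
  rfl

variable {f σ}

theorem coneMap_coneMap (hff : ∀ m, f (f m) = 0) (hσf : ∀ m, σ (f m) = -f (σ m)) (α : R)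
    (p : M × M) : coneMap f σ α (coneMap f σ α p) = 0 := by
  simp [hff, hσf]

theorem exact_coneMap_of_isUnit {α : R} (hα : IsUnit α) (hff : ∀ m, f (f m) = 0)
    (hσσ : ∀ m, σ (σ m) = m) (hσf : ∀ m, σ (f m) = -f (σ m)) :
    Function.Exact (coneMap f σ α) (coneMap f σ α) := by
  obtain ⟨u, rfl⟩ := hα
  let h : M × M →+ M × M :=
    AddMonoidHom.mk' (fun p => ((u⁻¹ : Rˣ) • σ p.2, 0)) fun p q => by simp
  refine Function.Exact.self_of_homotopy (h := h) (coneMap_coneMap hff hσf _) fun p => ?_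
  simp [h, hσσ, hσf, ← Units.smul_def]

theorem Function.Exact.coneMap (hf : Function.Exact f f) (hσf : ∀ m, σ (f m) = -f (σ m))
    (α : R) : Function.Exact (coneMap f σ α) (coneMap f σ α) := by
  refine .of_comp_of_mem_range (funext (coneMap_coneMap hf.apply_apply_eq_zero hσf α))
    fun ⟨a, b⟩ hab => ?_
  simp only [coneMap_apply, Prod.mk_eq_zero] at hab
  obtain ⟨p, rfl⟩ := (hf a).1 hab.1
  obtain ⟨q, hq⟩ := (hf (b - α • σ p)).1 (by simpa [hσf, sub_eq_add_neg] using hab.2)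
  exact ⟨(p, q), by simp [hq]⟩

theorem coneMap_zero : ⇑(coneMap f σ 0) = Prod.map f f := by
  ext <;> simp

end

theorem exact_coneMap_iff {K M : Type*} [DivisionRing K] [AddCommGroup M] [Module K M]
    {f σ : M →ₗ[K] M} (hff : ∀ m, f (f m) = 0) (hσσ : ∀ m, σ (σ m) = m)
    (hσf : ∀ m, σ (f m) = -f (σ m)) (α : K) :
    Function.Exact (coneMap f σ α) (coneMap f σ α) ↔ α ≠ 0 ∨ Function.Exact f f := by
  refine ⟨fun h => or_iff_not_imp_left.2 fun hα => ?_, ?_⟩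
  · obtain rfl := not_not.1 hα
    rw [coneMap_zero] at h
    exact h.of_prodMap f.map_zero
  · rintro (hα | hf)
    · exact exact_coneMap_of_isUnit hα.isUnit hff hσσ hσf
    · exact hf.coneMap hσf α

theorem stmt6_general (K : Type*) [Field K] (V : Type*) [AddCommGroup V] [Module K V]
    (M : Type*) [AddCommGroup M] [Module K M] [Module (ExteriorAlgebra K V) M]
    [IsScalarTower K (ExteriorAlgebra K V) M]
    (σ : M →ₗ[K] M)
    (hσσ : ∀ m : M, σ (σ m) = m)
    (hσι : ∀ (v : V) (m : M),
      σ ((ExteriorAlgebra.ι K v : ExteriorAlgebra K V) • m) =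
        -((ExteriorAlgebra.ι K v : ExteriorAlgebra K V) • σ m))
    (v : V) (α : K) :
    -- `ℓ' = ι v + α x` is regular on `M' = M ⊕ Mx` ...
    ({p : M × M |
        ((ExteriorAlgebra.ι K v : ExteriorAlgebra K V) • p.1,
          (ExteriorAlgebra.ι K v : ExteriorAlgebra K V) • p.2 + α • σ p.1) = 0} =
      Set.range fun p : M × M =>
        ((ExteriorAlgebra.ι K v : ExteriorAlgebra K V) • p.1,
          (ExteriorAlgebra.ι K v : ExteriorAlgebra K V) • p.2 + α • σ p.1))
    ↔
    -- ... iff `α ≠ 0` or `ℓ = ι v` is regular on `M`.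
    (α ≠ 0 ∨
      ({m : M | (ExteriorAlgebra.ι K v : ExteriorAlgebra K V) • m = 0} =
        Set.range fun m : M => (ExteriorAlgebra.ι K v : ExteriorAlgebra K V) • m)) := by
  let f := DistribSMul.toLinearMap K M (ι K v : ExteriorAlgebra K V)
  have hff : ∀ m, f (f m) = 0 := fun m => by
    simp only [f, DistribSMul.toLinearMap_apply, smul_smul, ι_sq_zero, zero_smul]
  rw [Set.ext_iff, Set.ext_iff]
  exact exact_coneMap_iff hff hσσ (hσι v) α

/-- Let `E = Λ(V)` and let `M` be a graded `E`-module, with grading recorded by its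
parity operator `σ` (which is `(-1)^deg` on homogeneous elements, so `σ² = id` and
`σ(ℓ•m) = -ℓ•σ(m)` for linear forms `ℓ`).  Let `E' = E ⊗ Λ⟨x⟩` and `M' = M ⊗_E E'`,
so that `M' = M ⊕ Mx` with a degree-one element `ℓ' = ℓ + αx` of `E'` (where
`ℓ = ι v ∈ E₁` and `α ∈ K`) acting by `ℓ'·(a + bx) = ℓa + (ℓb + α σ(a))x`.
Then `ℓ'` is regular on `M'` if and only if `α ≠ 0` or `ℓ` is regular on `M`;
consequently the singular variety of `M'` in `E'₁` equals that of `M` in `E₁`. -/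
theorem stmt6 (K : Type*) [Field K] (V : Type*) [AddCommGroup V] [Module K V]
    (M : Type*) [AddCommGroup M] [Module K M] [Module (ExteriorAlgebra K V) M]
    [IsScalarTower K (ExteriorAlgebra K V) M] [SMulCommClass K (ExteriorAlgebra K V) M]
    (σ : M →ₗ[K] M)
    (hσσ : ∀ m : M, σ (σ m) = m)
    (hσι : ∀ (v : V) (m : M),
      σ ((ExteriorAlgebra.ι K v : ExteriorAlgebra K V) • m) =
        -((ExteriorAlgebra.ι K v : ExteriorAlgebra K V) • σ m))
    (v : V) (α : K) :
    -- `ℓ' = ι v + α x` is regular on `M' = M ⊕ Mx` ...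
    ({p : M × M |
        ((ExteriorAlgebra.ι K v : ExteriorAlgebra K V) • p.1,
          (ExteriorAlgebra.ι K v : ExteriorAlgebra K V) • p.2 + α • σ p.1) = 0} =
      Set.range fun p : M × M =>
        ((ExteriorAlgebra.ι K v : ExteriorAlgebra K V) • p.1,
          (ExteriorAlgebra.ι K v : ExteriorAlgebra K V) • p.2 + α • σ p.1))
    ↔
    -- ... iff `α ≠ 0` or `ℓ = ι v` is regular on `M`.
    (α ≠ 0 ∨
      ({m : M | (ExteriorAlgebra.ι K v : ExteriorAlgebra K V) • m = 0} =
        Set.range fun m : M => (ExteriorAlgebra.ι K v : ExteriorAlgebra K V) • m)) :=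
  stmt6_general K V M σ hσσ hσι v α
end

section
/- Let E be the exterior algebra on n variables over an infinite field and P_n the path graph on n vertices. If n ≡ 1 (mod 3), then the linear form e_1 + e_4 + e_7 + ... + e_{n} (the sum of e_{3i+1} for 0 ≤ i ≤ ⌊n/3⌋) is a regular element on E/I_E(P_n). -/
open ExteriorAlgebra

noncomputable instance instModuleExtSelf (K : Type*) [Field K] (V : Type*) [AddCommGroup V]
    [Module K V] : Module (ExteriorAlgebra K V) (ExteriorAlgebra K V) := Semiring.toModule

/-- The edge ideal of a simple graph `G` in the exterior algebra on its vertex set. -/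
noncomputable def edgeIdeal (K : Type*) [Field K] {α : Type*} [DecidableEq α]
    (G : SimpleGraph α) : Ideal (ExteriorAlgebra K (α → K)) :=
  Ideal.span {x | ∃ i j, G.Adj i j ∧
      x = ExteriorAlgebra.ι K (Pi.single i 1) * ExteriorAlgebra.ι K (Pi.single j 1)}

/-!
Let `ℓ = ι v` with `M = supp v` independent in `G`, and suppose every independent `S` leaves some
vertex `j ∈ M` with no neighbour in `S`; the set of such `j` does not change when vertices of `M`
are added to `S`. Let `σ` contract each monomial `e_S` with `v(j)⁻¹ e_j^*` for such a `j` (and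
kill `e_S` when there is none). Since contraction is an antiderivation taking the value
`e_j^*(v) = v(j)` on `ℓ`, we get `x ≡ ℓ σ x + σ (ℓ x) (mod I)` on every `e_S`: the monomials
without a `j` contain an edge, so lie in `I`. As `j` is never an endpoint of an edge inside `S`,
`σ` maps `I` into itself, so `ℓ x ∈ I` gives `x ≡ ℓ σ x (mod I)`.

For `P_n` with `n ≡ 1 (mod 3)` and `M = {0, 3, …, n - 1}` (0-based), an independent set containing
a neighbour of every vertex of `M` must contain `1, 4, …, n - 3`, and then `n - 1` has no
neighbour left in it.
-/

namespace ExteriorAlgebra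

section Monomials

variable {R M I : Type*} [CommRing R] [AddCommGroup M] [Module R M] [LinearOrder I]
  (b : Module.Basis I R M)

lemma basis_singleton (j : I) : b.ExteriorAlgebra {j} = ι R (b j) := by
  rw [basis_apply_ofCard b (Finset.card_singleton j)]
  simp only [ιMulti_succ_apply, Function.comp_apply, ιMulti_apply, List.ofFn_zero,
    List.prod_nil, mul_one]
  have := (Set.powersetCard.mem_range_ofFinEmbEquiv_symm_iff_mem
    (Set.powersetCard.ofCard (Finset.card_singleton j)) j).2 (Finset.mem_singleton_self j)
  obtain ⟨k, hk⟩ := this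
  rw [Subsingleton.elim 0 k, hk]

lemma ι_mul_basis_of_mem {j : I} {S : Finset I} (h : j ∈ S) :
    ι R (b j) * b.ExteriorAlgebra S = 0 := by
  have := basis_mul_of_not_disjoint b (Set.powersetCard.ofCard (Finset.card_singleton j))
    (Set.powersetCard.ofCard rfl) (Finset.not_disjoint_iff.2 ⟨j, Finset.mem_singleton_self j, h⟩)
  rwa [Set.powersetCard.val_ofCard, Set.powersetCard.val_ofCard,
    basis_singleton] at this

lemma exists_ι_mul_basis_of_notMem {j : I} {S : Finset I} (h : j ∉ S) :
    ∃ ε : ℤˣ, ι R (b j) * b.ExteriorAlgebra S = ε • b.ExteriorAlgebra (insert j S) := by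
  let s := Set.powersetCard.ofCard (Finset.card_singleton j)
  let t := Set.powersetCard.ofCard (rfl : S.card = S.card)
  have hst : Disjoint s.val t.val := Finset.disjoint_singleton_left.2 h
  have hU : (Set.powersetCard.disjUnion hst).val = insert j S := by
    ext x
    rw [Set.powersetCard.mem_coe_iff, Set.powersetCard.mem_disjUnion]
    simp [s, t, ← Set.powersetCard.mem_coe_iff]
  have h1 := basis_mul_of_disjoint b s t hst
  rw [hU, Set.powersetCard.val_ofCard, Set.powersetCard.val_ofCard,
    basis_singleton] at h1
  exact ⟨_, h1⟩

lemma exists_ι_mul_ι_mul_basis {a a' : I} {T : Finset I} (ha : a ∉ insert a' T)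
    (ha' : a' ∉ T) : ∃ ε : ℤˣ, ι R (b a) * ι R (b a') * b.ExteriorAlgebra T =
      ε • b.ExteriorAlgebra (insert a (insert a' T)) := by
  obtain ⟨ε', hε'⟩ := exists_ι_mul_basis_of_notMem b ha'
  obtain ⟨ε, hε⟩ := exists_ι_mul_basis_of_notMem b ha
  exact ⟨ε' * ε, by rw [mul_assoc, hε', mul_smul_comm, hε, smul_smul]⟩

end Monomials

lemma commute_ι_mul_ι {R M : Type*} [CommRing R] [AddCommGroup M] [Module R M]
    (u w : M) (x : ExteriorAlgebra R M) : Commute (ι R u * ι R w) x := by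
  have anti (y z : M) : ι R y * ι R z = -(ι R z * ι R y) :=
    eq_neg_of_add_eq_zero_left (ι_add_mul_swap y z)
  induction x using ExteriorAlgebra.induction with
  | algebraMap r => exact Algebra.commute_algebraMap_right r _
  | ι z =>
    change ι R u * ι R w * ι R z = ι R z * (ι R u * ι R w)
    rw [mul_assoc, anti w z, mul_neg, ← mul_assoc, anti u z, neg_mul, neg_neg, mul_assoc]
  | mul x y hx hy => exact hx.mul_right hy
  | add x y hx hy => exact hx.add_right hy

end ExteriorAlgebra

lemma Module.Basis.map_mem_of_forall_mem {ι R M N : Type*} [Semiring R] [AddCommMonoid M]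
    [Module R M] [AddCommMonoid N] [Module R N] (b : Module.Basis ι R M) (f : M →ₗ[R] N)
    {p : Submodule R N} (h : ∀ i, f (b i) ∈ p) (x : M) : f x ∈ p := by
  have : Submodule.span R (Set.range b) ≤ p.comap f :=
    Submodule.span_le.2 (Set.range_subset_iff.2 h)
  exact this (b.span_eq ▸ Submodule.mem_top)

section FreeVertices

variable {α : Type*} (G : SimpleGraph α)

def freeVertices (M : Set α) (S : Finset α) : Set α := {j ∈ M | ∀ t ∈ S, ¬G.Adj j t}

lemma freeVertices_insert [DecidableEq α] {M : Set α} (hM : G.IsIndepSet M) {j : α}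
    (hj : j ∈ M) (S : Finset α) : freeVertices G M (insert j S) = freeVertices G M S := by
  ext i
  change (i ∈ M ∧ ∀ t ∈ insert j S, ¬G.Adj i t) ↔ (i ∈ M ∧ ∀ t ∈ S, ¬G.Adj i t)
  rw [Finset.forall_mem_insert]
  refine and_congr_right fun hi => and_iff_right ?_
  rcases eq_or_ne i j with rfl | hij
  · exact G.irrefl
  · exact hM hi hj hij

variable {K : Type*} [Field K] (v : α → K)

open Classical in
noncomputable def freeDual (S : Finset α) : Module.Dual K (α → K) :=
  if h : (freeVertices G (Function.support v) S).Nonempty then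
    (v h.some)⁻¹ • LinearMap.proj h.some
  else 0

lemma freeDual_apply_self {S : Finset α} (h : (freeVertices G (Function.support v) S).Nonempty) :
    freeDual G v S v = 1 := by
  rw [freeDual, dif_pos h, LinearMap.smul_apply, LinearMap.proj_apply, smul_eq_mul,
    inv_mul_cancel₀ h.some_mem.1]

lemma freeDual_single_of_adj [DecidableEq α] {S : Finset α} {a t : α} (ht : t ∈ S)
    (h : G.Adj a t) : freeDual G v S (Pi.single a 1) = 0 := by
  unfold freeDual
  split_ifs with hS
  · have hne : hS.some ≠ a := fun heq => hS.some_mem.2 t ht (heq ▸ h)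
    simp [hne]
  · rfl

lemma freeDual_insert [DecidableEq α] (hM : G.IsIndepSet (Function.support v)) {j : α}
    (hj : v j ≠ 0) (S : Finset α) : freeDual G v (insert j S) = freeDual G v S := by
  unfold freeDual
  rw [freeVertices_insert G hM hj]

end FreeVertices

section EdgeHomotopy

open CliffordAlgebra

variable {K α : Type*} [Field K] [LinearOrder α] [Fintype α] (G : SimpleGraph α)

local notation "𝔼" => ExteriorAlgebra K (α → K)
local notation "𝐞" => Module.Basis.ExteriorAlgebra (Pi.basisFun K α)

lemma mul_mem_edgeIdeal_of_adj {a a' : α} (h : G.Adj a a') (x : 𝔼) :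
    ι K (Pi.basisFun K α a) * ι K (Pi.basisFun K α a') * x ∈ edgeIdeal K G := by
  rw [(commute_ι_mul_ι _ _ x).eq]
  exact Ideal.mul_mem_left _ x (Ideal.subset_span ⟨a, a', h, by simp⟩)

lemma basis_mem_edgeIdeal_of_adj {S : Finset α} {a a' : α} (ha : a ∈ S) (ha' : a' ∈ S)
    (h : G.Adj a a') : 𝐞 S ∈ edgeIdeal K G := by
  set T := (S.erase a).erase a'
  obtain ⟨ε, hε⟩ := exists_ι_mul_ι_mul_basis (Pi.basisFun K α) (a := a) (a' := a') (T := T)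
    (by simp [T, G.ne_of_adj h]) (by simp [T])
  have hS : insert a (insert a' T) = S := by
    rw [Finset.insert_erase (Finset.mem_erase.2 ⟨G.ne_of_adj h |>.symm, ha'⟩),
      Finset.insert_erase ha]
  rw [hS] at hε
  rw [← inv_smul_smul ε (𝐞 S), ← hε, Units.smul_def]
  exact zsmul_mem (mul_mem_edgeIdeal_of_adj G h _) _

variable (v : α → K)

noncomputable def edgeHomotopy : 𝔼 →ₗ[K] 𝔼 :=
  (𝐞).constr K fun S => contractLeft (freeDual G v S) (𝐞 S)

lemma edgeHomotopy_units_smul_basis (ε : ℤˣ) (S : Finset α) :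
    edgeHomotopy G v (ε • 𝐞 S) = contractLeft (freeDual G v S) (ε • 𝐞 S) := by
  rw [Units.smul_def, map_zsmul, map_zsmul, edgeHomotopy, Module.Basis.constr_basis]

lemma edgeHomotopy_basis (S : Finset α) :
    edgeHomotopy G v (𝐞 S) = contractLeft (freeDual G v S) (𝐞 S) := by
  simpa using edgeHomotopy_units_smul_basis G v 1 S

variable {G v}

lemma edgeHomotopy_ι_basisFun_mul_basis (hM : G.IsIndepSet (Function.support v)) {j : α}
    (hj : v j ≠ 0) (S : Finset α) :
    edgeHomotopy G v (ι K (Pi.basisFun K α j) * 𝐞 S) =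
      contractLeft (freeDual G v S) (ι K (Pi.basisFun K α j) * 𝐞 S) := by
  by_cases hjS : j ∈ S
  · rw [ι_mul_basis_of_mem _ hjS, map_zero, map_zero]
  · obtain ⟨ε, hε⟩ := exists_ι_mul_basis_of_notMem (Pi.basisFun K α) hjS
    rw [hε, edgeHomotopy_units_smul_basis, freeDual_insert G v hM hj]

lemma edgeHomotopy_ι_mul_basis (hM : G.IsIndepSet (Function.support v)) (S : Finset α) :
    edgeHomotopy G v (ι K v * 𝐞 S) = contractLeft (freeDual G v S) (ι K v * 𝐞 S) := by
  have hv : ι K v = ∑ j, v j • ι K (Pi.basisFun K α j) := by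
    conv_lhs => rw [← (Pi.basisFun K α).sum_repr v]
    simp
  rw [hv, Finset.sum_mul, map_sum, map_sum]
  refine Finset.sum_congr rfl fun j _ => ?_
  rw [smul_mul_assoc, map_smul, map_smul]
  by_cases hj : v j = 0
  · rw [hj, zero_smul, zero_smul]
  · rw [edgeHomotopy_ι_basisFun_mul_basis hM hj]

lemma basis_sub_ι_mul_edgeHomotopy (hM : G.IsIndepSet (Function.support v)) (S : Finset α) :
    𝐞 S - ι K v * edgeHomotopy G v (𝐞 S) - edgeHomotopy G v (ι K v * 𝐞 S) =
      (1 - freeDual G v S v) • 𝐞 S := by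
  rw [edgeHomotopy_ι_mul_basis hM, contractLeft_ι_mul, edgeHomotopy_basis, sub_smul, one_smul]
  abel

lemma sub_ι_mul_edgeHomotopy_mem_edgeIdeal (hM : G.IsIndepSet (Function.support v))
    (hfree : ∀ S : Finset α, G.IsIndepSet ↑S → (freeVertices G (Function.support v) S).Nonempty)
    (x : 𝔼) : x - ι K v * edgeHomotopy G v x - edgeHomotopy G v (ι K v * x) ∈ edgeIdeal K G := by
  let D : 𝔼 →ₗ[K] 𝔼 := LinearMap.id - LinearMap.mulLeft K (ι K v) ∘ₗ edgeHomotopy G v -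
    edgeHomotopy G v ∘ₗ LinearMap.mulLeft K (ι K v)
  refine (𝐞).map_mem_of_forall_mem D (p := (edgeIdeal K G).restrictScalars K) (fun S => ?_) x
  change 𝐞 S - ι K v * edgeHomotopy G v (𝐞 S) - edgeHomotopy G v (ι K v * 𝐞 S) ∈ edgeIdeal K G
  rw [basis_sub_ι_mul_edgeHomotopy hM]
  by_cases hS : G.IsIndepSet ↑S
  · rw [freeDual_apply_self G v (hfree S hS), sub_self, zero_smul]
    exact zero_mem _
  · obtain ⟨a, ha, a', ha', -, h⟩ : ∃ a ∈ S, ∃ a' ∈ S, a ≠ a' ∧ G.Adj a a' := by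
      simpa [SimpleGraph.isIndepSet_iff, Set.Pairwise] using hS
    exact Submodule.smul_of_tower_mem _ _ (basis_mem_edgeIdeal_of_adj G ha ha' h)

variable (v) in
lemma edgeHomotopy_mul_basis_mem_edgeIdeal_of_adj {a a' : α} (h : G.Adj a a') (T : Finset α) :
    edgeHomotopy G v (ι K (Pi.basisFun K α a) * ι K (Pi.basisFun K α a') * 𝐞 T) ∈
      edgeIdeal K G := by
  by_cases ha' : a' ∈ T
  · rw [mul_assoc, ι_mul_basis_of_mem _ ha', mul_zero, map_zero]
    exact zero_mem _
  by_cases ha : a ∈ insert a' T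
  · obtain ⟨ε, hε⟩ := exists_ι_mul_basis_of_notMem (Pi.basisFun K α) ha'
    rw [mul_assoc, hε, mul_smul_comm, ι_mul_basis_of_mem _ ha, smul_zero,
      map_zero]
    exact zero_mem _
  obtain ⟨ε, hε⟩ := exists_ι_mul_ι_mul_basis (Pi.basisFun K α) ha ha'
  have hda : freeDual G v (insert a (insert a' T)) (Pi.basisFun K α a) = 0 := by
    simpa using freeDual_single_of_adj G v (by simp) h
  have hda' : freeDual G v (insert a (insert a' T)) (Pi.basisFun K α a') = 0 := by
    simpa using freeDual_single_of_adj G v (Finset.mem_insert_self a _) h.symm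
  rw [hε, edgeHomotopy_units_smul_basis, ← hε, mul_assoc, contractLeft_ι_mul, contractLeft_ι_mul,
    hda, zero_smul, zero_sub, hda', zero_smul, zero_sub, mul_neg, neg_neg, ← mul_assoc]
  exact mul_mem_edgeIdeal_of_adj G h _

variable (v) in
lemma edgeHomotopy_mul_mem_edgeIdeal {x : 𝔼} (hx : x ∈ edgeIdeal K G) (y : 𝔼) :
    edgeHomotopy G v (y * x) ∈ edgeIdeal K G := by
  induction hx using Submodule.span_induction generalizing y with
  | mem x hx =>
    obtain ⟨a, a', h, rfl⟩ := hx
    rw [← Pi.basisFun_apply K α a, ← Pi.basisFun_apply K α a', ← (commute_ι_mul_ι _ _ y).eq]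
    exact (𝐞).map_mem_of_forall_mem (edgeHomotopy G v ∘ₗ
      LinearMap.mulLeft K (ι K (Pi.basisFun K α a) * ι K (Pi.basisFun K α a')))
      (p := (edgeIdeal K G).restrictScalars K)
      (fun T => edgeHomotopy_mul_basis_mem_edgeIdeal_of_adj v h T) y
  | zero => rw [mul_zero, map_zero]; exact zero_mem _
  | add x x' _ _ hx hx' => rw [mul_add, map_add]; exact add_mem (hx y) (hx' y)
  | smul r x _ hx => rw [smul_eq_mul, ← mul_assoc]; exact hx (y * r)

theorem setOf_ι_smul_eq_zero_eq_range_ι_smul (hM : G.IsIndepSet (Function.support v))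
    (hfree : ∀ S : Finset α, G.IsIndepSet ↑S → (freeVertices G (Function.support v) S).Nonempty) :
    {m : 𝔼 ⧸ edgeIdeal K G | (ι K v : 𝔼) • m = 0} = Set.range fun m : 𝔼 ⧸ edgeIdeal K G =>
      (ι K v : 𝔼) • m := by
  ext m
  constructor
  · intro hm
    obtain ⟨x, rfl⟩ := Submodule.Quotient.mk_surjective _ m
    have hx : ι K v * x ∈ edgeIdeal K G := by
      rwa [Set.mem_ofPred_eq, ← Submodule.Quotient.mk_smul, Submodule.Quotient.mk_eq_zero] at hm
    refine ⟨Submodule.Quotient.mk (edgeHomotopy G v x), ?_⟩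
    dsimp only
    rw [← Submodule.Quotient.mk_smul, Submodule.Quotient.eq, smul_eq_mul, ← neg_mem_iff, neg_sub]
    simpa using add_mem (sub_ι_mul_edgeHomotopy_mem_edgeIdeal hM hfree x)
      (edgeHomotopy_mul_mem_edgeIdeal v hx 1)
  · rintro ⟨m', rfl⟩
    rw [Set.mem_ofPred_eq, smul_smul, ι_sq_zero, zero_smul]

end EdgeHomotopy

section PathGraph

open SimpleGraph

lemma pathGraph_isIndepSet_setOf_mod_three (n : ℕ) :
    (pathGraph n).IsIndepSet {j : Fin n | (j : ℕ) % 3 = 0} := by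
  intro i hi j hj _ hadj
  simp only [Set.mem_ofPred_eq] at hi hj
  rw [pathGraph_adj] at hadj
  omega

lemma pathGraph_freeVertices_setOf_mod_three_nonempty {n : ℕ} (hn : n % 3 = 1) (S : Finset (Fin n))
    (hS : (pathGraph n).IsIndepSet ↑S) :
    (freeVertices (pathGraph n) {j : Fin n | (j : ℕ) % 3 = 0} S).Nonempty := by
  by_contra hempty
  let P (k : ℕ) : Prop := ∃ t ∈ S, (t : ℕ) = k
  have hcover (j : ℕ) (hj : j < n) (hj3 : j % 3 = 0) : P (j + 1) ∨ (1 ≤ j ∧ P (j - 1)) := by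
    obtain ⟨t, ht, hadj⟩ : ∃ t ∈ S, (pathGraph n).Adj ⟨j, hj⟩ t := by
      by_contra! h
      exact hempty ⟨⟨j, hj⟩, hj3, h⟩
    have hadj' : j + 1 = t ∨ (t : ℕ) + 1 = j := pathGraph_adj.1 hadj
    rcases hadj' with h | h
    · exact Or.inl ⟨t, ht, h.symm⟩
    · exact Or.inr ⟨by omega, t, ht, by omega⟩
  have hgap (k : ℕ) (hk : P k) : ¬P (k + 1) := by
    rintro ⟨t', ht', hkt'⟩
    obtain ⟨t, ht, hkt⟩ := hk
    exact hS ht ht' (fun h => by subst h; omega) (pathGraph_adj.2 (Or.inl (by omega)))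
  have hchain (i : ℕ) (hi : 3 * i + 1 < n) : P (3 * i + 1) := by
    induction i with
    | zero => simpa using hcover 0 (by omega) rfl
    | succ i ih =>
      rcases hcover (3 * i + 3) (by omega) (by omega) with h | ⟨-, h⟩
      · exact h
      · exact absurd h (hgap _ (ih (by omega)))
  rcases hcover (n - 1) (by omega) (by omega) with ⟨t, -, ht⟩ | ⟨hn1, h⟩
  · omega
  · have hn3 : P (n - 3) := by
      simpa [show 3 * ((n - 4) / 3) + 1 = n - 3 by omega] using hchain ((n - 4) / 3) (by omega)
    exact hgap _ hn3 (by rwa [show n - 3 + 1 = n - 1 - 1 by omega])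

end PathGraph

theorem stmt8_general (K : Type*) [Field K] (n : ℕ) (hn : n % 3 = 1) :
    {m : ExteriorAlgebra K (Fin n → K) ⧸ edgeIdeal K (SimpleGraph.pathGraph n) |
        (ExteriorAlgebra.ι K (fun j : Fin n => if (j : ℕ) % 3 = 0 then (1 : K) else 0) :
          ExteriorAlgebra K (Fin n → K)) • m = 0} =
      Set.range fun m : ExteriorAlgebra K (Fin n → K) ⧸ edgeIdeal K (SimpleGraph.pathGraph n) =>
        (ExteriorAlgebra.ι K (fun j : Fin n => if (j : ℕ) % 3 = 0 then (1 : K) else 0) :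
          ExteriorAlgebra K (Fin n → K)) • m := by
  have hsupp : Function.support (fun j : Fin n => if (j : ℕ) % 3 = 0 then (1 : K) else 0) =
      {j : Fin n | (j : ℕ) % 3 = 0} := by
    ext j
    simp
  apply setOf_ι_smul_eq_zero_eq_range_ι_smul <;> rw [hsupp]
  · exact pathGraph_isIndepSet_setOf_mod_three n
  · exact pathGraph_freeVertices_setOf_mod_three_nonempty hn

/-- Let `E` be the exterior algebra on `n` variables over an infinite field and `Pₙ` the
path graph on `n` vertices.  If `n ≡ 1 (mod 3)`, then the linear form
`e₁ + e₄ + e₇ + ⋯ + eₙ` (the sum of the variables with 1-based index `≡ 1 (mod 3)`) is a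
regular element on `E/I_E(Pₙ)`. -/
theorem stmt8 (K : Type*) [Field K] [Infinite K] (n : ℕ) (hn : n % 3 = 1) :
    {m : ExteriorAlgebra K (Fin n → K) ⧸ edgeIdeal K (SimpleGraph.pathGraph n) |
        (ExteriorAlgebra.ι K (fun j : Fin n => if (j : ℕ) % 3 = 0 then (1 : K) else 0) :
          ExteriorAlgebra K (Fin n → K)) • m = 0} =
      Set.range fun m : ExteriorAlgebra K (Fin n → K) ⧸ edgeIdeal K (SimpleGraph.pathGraph n) =>
        (ExteriorAlgebra.ι K (fun j : Fin n => if (j : ℕ) % 3 = 0 then (1 : K) else 0) :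
          ExteriorAlgebra K (Fin n → K)) • m :=
  stmt8_general K n hn
end

section
/- If M is a graded module over an exterior algebra E and ℓ ∈ E_1 is a regular element on M, then the Hilbert series of M is divisible by (1+t); more precisely HS_M(t) = (1+t) · HS_{M/ℓM}(t). -/
/-!
Multiplication by `ℓ` is a `K`-linear map `L` of degree one with `ker L = im L = ℓM`. In each
degree, rank–nullity for `M → M/ℓM` gives `dim Mᵢ = dim (M/ℓM)ᵢ + dim (ℓM ∩ Mᵢ)`, and, since `L`
has the same kernel, also `dim (M/ℓM)ᵢ = dim ℓMᵢ`. As `ℓM ∩ M₀ = 0` and `ℓM ∩ Mᵢ₊₁ = ℓMᵢ`, this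
yields `dim Mᵢ₊₁ = dim (M/ℓM)ᵢ₊₁ + dim (M/ℓM)ᵢ`, the coefficientwise form of the identity.
-/

open ExteriorAlgebra

theorem ExteriorAlgebra.exteriorPower_eq_bot_of_finrank_lt {K V : Type*} [Field K]
    [AddCommGroup V] [Module K V] [Module.Finite K V] {i : ℕ} (hi : Module.finrank K V < i) :
    ⋀[K]^i V = ⊥ := by
  rw [← Submodule.finrank_eq_zero, exteriorPower.finrank_eq, Nat.choose_eq_zero_of_lt hi]

instance ExteriorAlgebra.instModuleFinite {K V : Type*} [Field K]
    [AddCommGroup V] [Module K V] [Module.Finite K V] : Module.Finite K (ExteriorAlgebra K V) := by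
  have hsup : ⨆ i ∈ Finset.range (Module.finrank K V + 1), ⋀[K]^i V = ⊤ := by
    rw [eq_top_iff,
      ← (DirectSum.Decomposition.isInternal fun i : ℕ => ⋀[K]^i V).submodule_iSup_eq_top]
    refine iSup_le fun i => ?_
    rcases lt_or_ge (Module.finrank K V) i with hi | hi
    · simp [exteriorPower_eq_bot_of_finrank_lt hi]
    · exact le_biSup (fun i => ⋀[K]^i V) (Finset.mem_range_succ_iff.mpr hi)
  rw [Module.finite_def, ← hsup]
  exact Submodule.fg_biSup _ _ fun i _ => Module.Finite.iff_fg.mp inferInstance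

section RankNullity

variable {K V V₁ V₂ : Type*} [Field K] [AddCommGroup V] [Module K V]
  [AddCommGroup V₁] [Module K V₁] [AddCommGroup V₂] [Module K V₂]

theorem Submodule.finrank_map_add_finrank_ker_inf (f : V →ₗ[K] V₁) (W : Submodule K V)
    [FiniteDimensional K W] :
    Module.finrank K (W.map f) + Module.finrank K ↥(LinearMap.ker f ⊓ W) =
      Module.finrank K W := by
  have hker : (LinearMap.ker f).comap W.subtype = (LinearMap.ker f ⊓ W).comap W.subtype := by
    rw [Submodule.comap_inf, Submodule.comap_subtype_self, inf_top_eq]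
  have h := (f.comp W.subtype).finrank_range_add_finrank_ker
  rwa [LinearMap.range_comp, Submodule.range_subtype, LinearMap.ker_comp, hker,
    (Submodule.comapSubtypeEquivOfLe inf_le_right).finrank_eq] at h

theorem Submodule.finrank_map_eq_of_ker_eq {f : V →ₗ[K] V₁} {g : V →ₗ[K] V₂}
    (h : LinearMap.ker f = LinearMap.ker g) (W : Submodule K V) [FiniteDimensional K W] :
    Module.finrank K (W.map f) = Module.finrank K (W.map g) := by
  have hf := W.finrank_map_add_finrank_ker_inf f
  have hg := W.finrank_map_add_finrank_ker_inf g
  rw [h] at hf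
  omega

end RankNullity

section GradedShift

open DirectSum

variable {R M : Type*} [Semiring R] [AddCommMonoid M] [Module R M]
  (ℳ : ℕ → Submodule R M) [Decomposition ℳ] {d : ℕ} {L : M →ₗ[R] M}

theorem DirectSum.decompose_map_add_of_homogeneous (hL : ∀ i, ∀ m ∈ ℳ i, L m ∈ ℳ (i + d))
    (i : ℕ) (m : M) : (decompose ℳ (L m) (i + d) : M) = L (decompose ℳ m i) := by
  induction m using Decomposition.inductionOn ℳ with
  | zero => simp
  | @homogeneous j m =>
    obtain rfl | hji := eq_or_ne j i
    · rw [decompose_of_mem_same ℳ (hL j m m.2), decompose_coe, of_eq_same]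
    · rw [decompose_of_mem_ne ℳ (hL j m m.2) (by omega), decompose_of_mem_ne ℳ m.2 hji, map_zero]
  | add a b ha hb => simp only [map_add, decompose_add, add_apply, Submodule.coe_add, ha, hb]

theorem DirectSum.decompose_map_of_lt_of_homogeneous (hL : ∀ i, ∀ m ∈ ℳ i, L m ∈ ℳ (i + d))
    {i : ℕ} (hi : i < d) (m : M) : (decompose ℳ (L m) i : M) = 0 := by
  induction m using Decomposition.inductionOn ℳ with
  | zero => simp
  | @homogeneous j m => exact decompose_of_mem_ne ℳ (hL j m m.2) (by omega)
  | add a b ha hb =>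
    simp only [map_add, decompose_add, add_apply, Submodule.coe_add, ha, hb, add_zero]

theorem LinearMap.range_inf_add_eq_map_of_homogeneous (hL : ∀ i, ∀ m ∈ ℳ i, L m ∈ ℳ (i + d))
    (i : ℕ) : LinearMap.range L ⊓ ℳ (i + d) = (ℳ i).map L := by
  refine le_antisymm ?_ fun _ ⟨m, hm, hx⟩ => hx ▸ ⟨⟨m, rfl⟩, hL i m hm⟩
  rintro _ ⟨⟨m, rfl⟩, hm⟩
  refine ⟨_, (decompose ℳ m i).2, ?_⟩
  rw [← decompose_map_add_of_homogeneous ℳ hL, decompose_of_mem_same ℳ hm]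

theorem LinearMap.range_inf_eq_bot_of_homogeneous (hL : ∀ i, ∀ m ∈ ℳ i, L m ∈ ℳ (i + d))
    {i : ℕ} (hi : i < d) : LinearMap.range L ⊓ ℳ i = ⊥ := by
  refine eq_bot_iff.mpr ?_
  rintro _ ⟨⟨m, rfl⟩, hm⟩
  rw [Submodule.mem_bot, ← decompose_of_mem_same ℳ hm]
  exact decompose_map_of_lt_of_homogeneous ℳ hL hi m

end GradedShift

theorem PowerSeries.mk_finrank_eq_one_add_X_mul {K M : Type*} [Field K] [AddCommGroup M]
    [Module K M] (ℳ : ℕ → Submodule K M) [DirectSum.Decomposition ℳ]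
    [∀ i, FiniteDimensional K (ℳ i)] {L : M →ₗ[K] M} (hL : ∀ i, ∀ m ∈ ℳ i, L m ∈ ℳ (i + 1))
    (hexact : LinearMap.ker L = LinearMap.range L) :
    (PowerSeries.mk fun i => Module.finrank K (ℳ i)) =
      (1 + PowerSeries.X) *
        PowerSeries.mk fun i => Module.finrank K ((ℳ i).map (LinearMap.range L).mkQ) := by
  have hsplit i := (ℳ i).finrank_map_add_finrank_ker_inf (LinearMap.range L).mkQ
  rw [Submodule.ker_mkQ] at hsplit
  ext (_ | i)
  · rw [add_mul, one_mul, map_add, coeff_zero_X_mul, coeff_mk, coeff_mk, ← hsplit,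
      LinearMap.range_inf_eq_bot_of_homogeneous ℳ hL zero_lt_one, finrank_bot]
  · rw [add_mul, one_mul, map_add, coeff_succ_X_mul, coeff_mk, coeff_mk, coeff_mk, ← hsplit,
      LinearMap.range_inf_add_eq_map_of_homogeneous ℳ hL,
      Submodule.finrank_map_eq_of_ker_eq (by rw [Submodule.ker_mkQ, hexact]) (ℳ i)]

theorem stmt11_general (K : Type*) [Field K] (n : ℕ)
    (M : Type*) [AddCommGroup M] [Module K M]
    [Module (ExteriorAlgebra K (Fin n → K)) M]
    [IsScalarTower K (ExteriorAlgebra K (Fin n → K)) M]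
    [Module.Finite (ExteriorAlgebra K (Fin n → K)) M]
    (ℳ : ℕ → Submodule K M) [DirectSum.Decomposition ℳ]
    (hgraded : ∀ (w : Fin n → K) (i : ℕ), ∀ m ∈ ℳ i,
      (ExteriorAlgebra.ι K w : ExteriorAlgebra K (Fin n → K)) • m ∈ ℳ (i + 1))
    (v : Fin n → K)
    (hreg : {m : M | (ExteriorAlgebra.ι K v : ExteriorAlgebra K (Fin n → K)) • m = 0} =
      Set.range fun m : M =>
        (ExteriorAlgebra.ι K v : ExteriorAlgebra K (Fin n → K)) • m) :
    (PowerSeries.mk fun i => Module.finrank K (ℳ i)) =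
      (1 + PowerSeries.X) *
        PowerSeries.mk (fun i => Module.finrank K ((ℳ i).map (Submodule.mkQ
          (Submodule.span K (Set.range fun m : M =>
            (ExteriorAlgebra.ι K v : ExteriorAlgebra K (Fin n → K)) • m))))) := by
  have : Module.Finite K M := .trans (ExteriorAlgebra K (Fin n → K)) M
  let L := Algebra.lsmul K K M (ι K v : ExteriorAlgebra K (Fin n → K))
  have hrange : Set.range (ι K v • · : M → M) = LinearMap.range L := (LinearMap.coe_range L).symm
  have hexact : LinearMap.ker L = LinearMap.range L := SetLike.coe_injective (hrange ▸ hreg)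
  rw [hrange, Submodule.span_eq]
  exact PowerSeries.mk_finrank_eq_one_add_X_mul ℳ (hgraded v) hexact

/-- Let `E` be the exterior algebra on `n` generators over a field `K`, `M` a finitely
generated graded `E`-module (with grading `ℳ` compatible with the action of `E₁`), and
`ℓ = ι v ∈ E₁` a regular element on `M`.  Then `HS_M(t) = (1+t) · HS_{M/ℓM}(t)`;
in particular `(1+t)` divides the Hilbert series of `M`. -/
theorem stmt11 (K : Type*) [Field K] (n : ℕ)
    (M : Type*) [AddCommGroup M] [Module K M]
    [Module (ExteriorAlgebra K (Fin n → K)) M]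
    [IsScalarTower K (ExteriorAlgebra K (Fin n → K)) M]
    [SMulCommClass K (ExteriorAlgebra K (Fin n → K)) M]
    [Module.Finite (ExteriorAlgebra K (Fin n → K)) M]
    (ℳ : ℕ → Submodule K M) [DirectSum.Decomposition ℳ]
    (hgraded : ∀ (w : Fin n → K) (i : ℕ), ∀ m ∈ ℳ i,
      (ExteriorAlgebra.ι K w : ExteriorAlgebra K (Fin n → K)) • m ∈ ℳ (i + 1))
    (v : Fin n → K)
    (hreg : {m : M | (ExteriorAlgebra.ι K v : ExteriorAlgebra K (Fin n → K)) • m = 0} =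
      Set.range fun m : M =>
        (ExteriorAlgebra.ι K v : ExteriorAlgebra K (Fin n → K)) • m) :
    (PowerSeries.mk fun i => Module.finrank K (ℳ i)) =
      (1 + PowerSeries.X) *
        PowerSeries.mk (fun i => Module.finrank K ((ℳ i).map (Submodule.mkQ
          (Submodule.span K (Set.range fun m : M =>
            (ExteriorAlgebra.ι K v : ExteriorAlgebra K (Fin n → K)) • m))))) :=
  stmt11_general K n M ℳ hgraded v hreg
end

section
/- Let E be the exterior algebra on 4 generators over a field K and I = (e_1e_2 - e_3e_4, e_1e_3 - e_2e_4). For any monomial order on E, the initial ideal of I is not generated by quadrics; in particular, the degree-3 component of I is all of the maximal ideal cubed, (e_1,e_2,e_3,e_4)^3, but for distinct indices i, j, k, the ideal (e_ie_j, e_ie_k) does not contain every degree-3 monomial of E. -/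
open ExteriorAlgebra

/-- The generators `e₁, e₂, e₃, e₄` of the exterior algebra on four variables. -/
noncomputable def e4 (K : Type*) [Field K] (i : Fin 4) : ExteriorAlgebra K (Fin 4 → K) :=
  ExteriorAlgebra.ι K (Pi.single i 1)

section helpers
variable (K : Type*) [Field K]

lemma ee_swap (a b : Fin 4) : e4 K a * e4 K b = -(e4 K b * e4 K a) :=
  eq_neg_of_add_eq_zero_left (ExteriorAlgebra.ι_add_mul_swap _ _)

lemma ee_swapL (a b : Fin 4) (x : ExteriorAlgebra K (Fin 4 → K)) :
    e4 K a * (e4 K b * x) = -(e4 K b * (e4 K a * x)) := by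
  rw [← mul_assoc, ee_swap, neg_mul, mul_assoc]

lemma ee_sq (a : Fin 4) : e4 K a * e4 K a = 0 := ExteriorAlgebra.ι_sq_zero _

lemma ee_sqL (a : Fin 4) (x : ExteriorAlgebra K (Fin 4 → K)) :
    e4 K a * (e4 K a * x) = 0 := by rw [← mul_assoc, ee_sq, zero_mul]

lemma h10 : e4 K 1 * e4 K 0 = -(e4 K 0 * e4 K 1) := ee_swap K 1 0
lemma h20 : e4 K 2 * e4 K 0 = -(e4 K 0 * e4 K 2) := ee_swap K 2 0
lemma h21 : e4 K 2 * e4 K 1 = -(e4 K 1 * e4 K 2) := ee_swap K 2 1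
lemma h30 : e4 K 3 * e4 K 0 = -(e4 K 0 * e4 K 3) := ee_swap K 3 0
lemma h31 : e4 K 3 * e4 K 1 = -(e4 K 1 * e4 K 3) := ee_swap K 3 1
lemma h32 : e4 K 3 * e4 K 2 = -(e4 K 2 * e4 K 3) := ee_swap K 3 2
lemma h10L (x) : e4 K 1 * (e4 K 0 * x) = -(e4 K 0 * (e4 K 1 * x)) := ee_swapL K 1 0 x
lemma h20L (x) : e4 K 2 * (e4 K 0 * x) = -(e4 K 0 * (e4 K 2 * x)) := ee_swapL K 2 0 x
lemma h21L (x) : e4 K 2 * (e4 K 1 * x) = -(e4 K 1 * (e4 K 2 * x)) := ee_swapL K 2 1 x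
lemma h30L (x) : e4 K 3 * (e4 K 0 * x) = -(e4 K 0 * (e4 K 3 * x)) := ee_swapL K 3 0 x
lemma h31L (x) : e4 K 3 * (e4 K 1 * x) = -(e4 K 1 * (e4 K 3 * x)) := ee_swapL K 3 1 x
lemma h32L (x) : e4 K 3 * (e4 K 2 * x) = -(e4 K 2 * (e4 K 3 * x)) := ee_swapL K 3 2 x

/-- the ideal in part 1 -/
noncomputable def I1 : Ideal (ExteriorAlgebra K (Fin 4 → K)) :=
  Ideal.span {e4 K 0 * e4 K 1 - e4 K 2 * e4 K 3, e4 K 0 * e4 K 2 - e4 K 1 * e4 K 3}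

lemma g1_mem : e4 K 0 * e4 K 1 - e4 K 2 * e4 K 3 ∈ I1 K :=
  Ideal.subset_span (Or.inl rfl)

lemma g2_mem : e4 K 0 * e4 K 2 - e4 K 1 * e4 K 3 ∈ I1 K :=
  Ideal.subset_span (Or.inr rfl)

lemma mem012 : e4 K 0 * e4 K 1 * e4 K 2 ∈ I1 K := by
  have h : e4 K 0 * e4 K 1 * e4 K 2 = e4 K 2 * (e4 K 0 * e4 K 1 - e4 K 2 * e4 K 3) := by
    simp only [mul_sub, mul_assoc, h10, h20, h21, h30, h31, h32, h10L, h20L, h21L, h30L, h31L,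
      h32L, ee_sq, ee_sqL, mul_neg, neg_mul, neg_neg, mul_zero, zero_mul, neg_zero, sub_zero, zero_sub, sub_neg_eq_add, add_zero, zero_add]
  rw [h]; exact Ideal.mul_mem_left _ _ (g1_mem K)

lemma mem013 : e4 K 0 * e4 K 1 * e4 K 3 ∈ I1 K := by
  have h : e4 K 0 * e4 K 1 * e4 K 3 = e4 K 3 * (e4 K 0 * e4 K 1 - e4 K 2 * e4 K 3) := by
    simp only [mul_sub, mul_assoc, h10, h20, h21, h30, h31, h32, h10L, h20L, h21L, h30L, h31L,
      h32L, ee_sq, ee_sqL, mul_neg, neg_mul, neg_neg, mul_zero, zero_mul, neg_zero, sub_zero, zero_sub, sub_neg_eq_add, add_zero, zero_add]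
  rw [h]; exact Ideal.mul_mem_left _ _ (g1_mem K)

lemma mem023 : e4 K 0 * e4 K 2 * e4 K 3 ∈ I1 K := by
  have h : e4 K 0 * e4 K 2 * e4 K 3 = e4 K 3 * (e4 K 0 * e4 K 2 - e4 K 1 * e4 K 3) := by
    simp only [mul_sub, mul_assoc, h10, h20, h21, h30, h31, h32, h10L, h20L, h21L, h30L, h31L,
      h32L, ee_sq, ee_sqL, mul_neg, neg_mul, neg_neg, mul_zero, zero_mul, neg_zero, sub_zero, zero_sub, sub_neg_eq_add, add_zero, zero_add]
  rw [h]; exact Ideal.mul_mem_left _ _ (g2_mem K)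

lemma mem123 : e4 K 1 * e4 K 2 * e4 K 3 ∈ I1 K := by
  have h : e4 K 1 * e4 K 2 * e4 K 3 = -(e4 K 1 * (e4 K 0 * e4 K 1 - e4 K 2 * e4 K 3)) := by
    simp only [mul_sub, mul_assoc, h10, h20, h21, h30, h31, h32, h10L, h20L, h21L, h30L, h31L,
      h32L, ee_sq, ee_sqL, mul_neg, neg_mul, neg_neg, mul_zero, zero_mul, neg_zero, sub_zero, zero_sub, sub_neg_eq_add, add_zero, zero_add, neg_neg]
  rw [h]; exact neg_mem (Ideal.mul_mem_left _ _ (g1_mem K))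

lemma tripleMem (a b c : Fin 4) : e4 K a * e4 K b * e4 K c ∈ I1 K := by
  fin_cases a <;> fin_cases b <;> fin_cases c <;>
    simp only [show (⟨0, by omega⟩ : Fin 4) = 0 from rfl, show (⟨1, by omega⟩ : Fin 4) = 1 from rfl,
      show (⟨2, by omega⟩ : Fin 4) = 2 from rfl, show (⟨3, by omega⟩ : Fin 4) = 3 from rfl,
      mul_assoc, h10, h20, h21, h30, h31, h32, h10L, h20L, h21L, h30L,
      h31L, h32L, ee_sq, ee_sqL, mul_neg, neg_mul, neg_neg, mul_zero, zero_mul, neg_zero] <;>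
    first
      | exact Submodule.zero_mem _
      | (rw [← mul_assoc]
         first
          | exact mem012 K | exact mem013 K | exact mem023 K | exact mem123 K)
      | (refine neg_mem ?_
         rw [← mul_assoc]
         first
          | exact mem012 K | exact mem013 K | exact mem023 K | exact mem123 K)



lemma hrep (u : Fin 4 → K) :
    ExteriorAlgebra.ι K u = ∑ i : Fin 4, u i • e4 K i := by
  have h : u = ∑ i : Fin 4, u i • (Pi.single i (1 : K) : Fin 4 → K) := by
    ext j
    simp [Pi.single_apply]
  conv_lhs => rw [h]
  rw [map_sum]
  simp [e4]

lemma genMem (u v w : Fin 4 → K) :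
    ExteriorAlgebra.ι K u * ExteriorAlgebra.ι K v * ExteriorAlgebra.ι K w ∈ I1 K := by
  rw [hrep K u, hrep K v, hrep K w]
  simp only [Finset.sum_mul, Finset.mul_sum, smul_mul_assoc, mul_smul_comm]
  refine Submodule.sum_mem _ fun a _ => Submodule.smul_of_tower_mem _ _
    (Submodule.sum_mem _ fun b _ => Submodule.smul_of_tower_mem _ _
      (Submodule.sum_mem _ fun c _ => Submodule.smul_of_tower_mem _ _ (tripleMem K _ _ _)))

lemma part1 (x : ExteriorAlgebra K (Fin 4 → K))
    (hx : x ∈ (LinearMap.range (ExteriorAlgebra.ι K :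
      (Fin 4 → K) →ₗ[K] ExteriorAlgebra K (Fin 4 → K))) ^ 3) : x ∈ I1 K := by
  rw [pow_succ, pow_succ, pow_one] at hx
  refine Submodule.mul_induction_on hx (fun m hm n hn => ?_) (fun a b ha hb => add_mem ha hb)
  obtain ⟨w, rfl⟩ := hn
  refine Submodule.mul_induction_on hm (fun p hp q hq => ?_) (fun a b ha hb => ?_)
  · obtain ⟨u, rfl⟩ := hp
    obtain ⟨v, rfl⟩ := hq
    exact genMem K u v w
  · rw [add_mul]; exact add_mem ha hb


lemma triple_ne_zero (a b c : Fin 4) (hab : a ≠ b) (hac : a ≠ c) (hbc : b ≠ c) :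
    e4 K a * e4 K b * e4 K c ≠ 0 := by
  intro h
  let g : (Fin 4 → K) →ₗ[K] (Fin 3 → K) := LinearMap.pi fun t => LinearMap.proj (![a, b, c] t)
  let A : (Fin 4 → K) [⋀^Fin 3]→ₗ[K] K := Matrix.detRowAlternating.compLinearMap g
  let F : ∀ n : ℕ, (Fin 4 → K) [⋀^Fin n]→ₗ[K] K := fun n =>
    match n with
    | 3 => A
    | _ => 0
  have h2 : ExteriorAlgebra.ιMulti K 3
      ![(Pi.single a 1 : Fin 4 → K), Pi.single b 1, Pi.single c 1]
      = e4 K a * e4 K b * e4 K c := by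
    rw [ExteriorAlgebra.ιMulti_apply]
    simp [e4, List.ofFn_succ, mul_assoc]
  have h3 := congrArg (ExteriorAlgebra.liftAlternating F) (h2.trans h)
  rw [ExteriorAlgebra.liftAlternating_apply_ιMulti, map_zero] at h3
  have h4 : A ![(Pi.single a 1 : Fin 4 → K), Pi.single b 1, Pi.single c 1] = 1 := by
    rw [AlternatingMap.compLinearMap_apply]
    have hm : (fun s => g (![(Pi.single a 1 : Fin 4 → K), Pi.single b 1, Pi.single c 1] s))
        = (1 : Matrix (Fin 3) (Fin 3) K) := by
      funext s t
      fin_cases s <;> fin_cases t <;>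
        simp [g, Matrix.one_apply, Pi.single_apply, hab, hac, hbc,
          hab.symm, hac.symm, hbc.symm, Ne.symm hab, Ne.symm hac, Ne.symm hbc]
    rw [hm]
    exact Matrix.det_one
  have h5 : F 3 = A := rfl
  rw [h5, h4] at h3
  exact one_ne_zero h3

lemma keyNot (i j k a b c : Fin 4) (hai : a ≠ i) (hbi : b ≠ i) (hci : c ≠ i)
    (hab : a ≠ b) (hac : a ≠ c) (hbc : b ≠ c) :
    e4 K a * e4 K b * e4 K c ∉ Ideal.span {e4 K i * e4 K j, e4 K i * e4 K k} := by
  intro hmem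
  let f : (Fin 4 → K) →ₗ[K] (Fin 4 → K) :=
    LinearMap.pi fun t => if t = i then 0 else LinearMap.proj t
  let φ := ExteriorAlgebra.map f
  have hzero : f (Pi.single i 1) = 0 := by
    funext t
    by_cases h : t = i <;> simp [f, h, Pi.single_apply, LinearMap.pi_apply]
  have hfix : ∀ t : Fin 4, t ≠ i → f (Pi.single t 1) = Pi.single t 1 := by
    intro t ht
    funext s
    by_cases h : s = i <;>
      simp [f, h, Pi.single_apply, LinearMap.pi_apply, Ne.symm ht]
  have hker : Ideal.span {e4 K i * e4 K j, e4 K i * e4 K k} ≤ RingHom.ker φ.toRingHom := by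
    rw [Ideal.span_le]
    intro x hx
    simp only [Set.mem_insert_iff, Set.mem_singleton_iff] at hx
    rcases hx with rfl | rfl <;>
      simp [RingHom.mem_ker, e4, map_mul, φ, hzero]
  have h0 : φ (e4 K a * e4 K b * e4 K c) = 0 := hker hmem
  rw [map_mul, map_mul] at h0
  simp only [e4, φ, ExteriorAlgebra.map_apply_ι, hfix a hai, hfix b hbi, hfix c hci] at h0
  exact triple_ne_zero K a b c hab hac hbc h0

end helpers


/-- Let `E = Λ⟨e₁,e₂,e₃,e₄⟩` and `I = (e₁e₂ - e₃e₄, e₁e₃ - e₂e₄)`.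
For any monomial order the initial ideal of `I` is not generated by quadrics:
the degree-3 component of `I` is all of `(e₁,e₂,e₃,e₄)³` (the full degree-3 piece of
`E`), but for distinct indices `i, j, k` the ideal `(e_ie_j, e_ie_k)` (the shape of the
ideal of leading terms of the two generators) does not contain every degree-3 monomial
of `E`. -/
theorem stmt17 (K : Type*) [Field K] :
    (∀ x ∈ (LinearMap.range (ExteriorAlgebra.ι K :
        (Fin 4 → K) →ₗ[K] ExteriorAlgebra K (Fin 4 → K))) ^ 3,
      x ∈ Ideal.span {e4 K 0 * e4 K 1 - e4 K 2 * e4 K 3,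
        e4 K 0 * e4 K 2 - e4 K 1 * e4 K 3}) ∧
    (∀ i j k : Fin 4, i ≠ j → i ≠ k → j ≠ k →
      ∃ a b c : Fin 4, a ≠ b ∧ a ≠ c ∧ b ≠ c ∧
        e4 K a * e4 K b * e4 K c ∉ Ideal.span {e4 K i * e4 K j, e4 K i * e4 K k}) := by
  constructor
  · exact fun x hx => part1 K x hx
  · intro i j k hij hik hjk
    fin_cases i
    · exact ⟨1, 2, 3, by decide, by decide, by decide,
        keyNot K 0 j k 1 2 3 (by decide) (by decide) (by decide)
          (by decide) (by decide) (by decide)⟩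
    · exact ⟨0, 2, 3, by decide, by decide, by decide,
        keyNot K 1 j k 0 2 3 (by decide) (by decide) (by decide)
          (by decide) (by decide) (by decide)⟩
    · exact ⟨0, 1, 3, by decide, by decide, by decide,
        keyNot K 2 j k 0 1 3 (by decide) (by decide) (by decide)
          (by decide) (by decide) (by decide)⟩
    · exact ⟨0, 1, 2, by decide, by decide, by decide,
        keyNot K 3 j k 0 1 2 (by decide) (by decide) (by decide)
          (by decide) (by decide) (by decide)⟩
end
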